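/- arXiv:2305.01091 — 3 statements merged into one kernel-verified Lean document; each statement's English description precedes it below -/
import Mathlib

section
/- Let d be a rational number and a1, a2, b1, b2, c rationals with a1^2 - d*a2^2 = -1, b1^2 - d*b2^2 = -1, b2 - a2 ≠ 0, and c = (a1*b2 - a2*b1)/(b2 - a2). Then (a1 - c)^2*(b1^2 + 1) = (b1 - c)^2*(a1^2 + 1). -/
/-! `c` is the point where the chord through `(a1, a2)` and `(b1, b2)` meets the axis `y = 0`,
so `(a1 - c) / a2 = (b1 - c) / b2`. On the conic, `a1 ^ 2 + 1 = d * a2 ^ 2` and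
`b1 ^ 2 + 1 = d * b2 ^ 2`, and the identity becomes `d` times the square of that proportion. -/

theorem sub_chord_intercept_mul_eq {K : Type*} [Field K] {a1 a2 b1 b2 : K} (hne : b2 - a2 ≠ 0) :
    (a1 - (a1 * b2 - a2 * b1) / (b2 - a2)) * b2 = (b1 - (a1 * b2 - a2 * b1) / (b2 - a2)) * a2 := by
  field_simp
  ring

theorem stmt_1 (d a1 a2 b1 b2 c : ℚ)
    (ha : a1 ^ 2 - d * a2 ^ 2 = -1) (hb : b1 ^ 2 - d * b2 ^ 2 = -1)
    (hne : b2 - a2 ≠ 0) (hc : c = (a1 * b2 - a2 * b1) / (b2 - a2)) :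
    (a1 - c) ^ 2 * (b1 ^ 2 + 1) = (b1 - c) ^ 2 * (a1 ^ 2 + 1) := by
  have key : (a1 - c) * b2 = (b1 - c) * a2 := hc ▸ sub_chord_intercept_mul_eq hne
  linear_combination (a1 - c) ^ 2 * hb - (b1 - c) ^ 2 * ha
    + d * ((a1 - c) * b2 + (b1 - c) * a2) * key
end

section
/- Let l, m, n be integers with l*m*n ≠ 0, |l| ≠ |m|, and l*m ≠ n^2. Set a = (l^2 - n^2)/(2*l*n), b = (m^2 - n^2)/(2*m*n), c = (l*m - n^2)/((l+m)*n), assuming l + m ≠ 0. Then (a - c)^2*(b^2 + 1) = (b - c)^2*(a^2 + 1). -/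
/-!
The number `a` is the ratio of the legs `l² - n²` and `2ln` of a Pythagorean triangle with
hypotenuse `l² + n²`, so `a² + 1 = ((l² + n²) / (2ln))²`. Moreover `a - c` factors as
`(l - m)(l² + n²) / (2l(l + m)n)`, and since `c` is symmetric in `l` and `m`, `b - c` is the same
expression with `l` and `m` swapped. Both sides of the identity are therefore the square of
`(l - m)(l² + n²)(m² + n²) / (4lm(l + m)n²)`.
-/

section PythagoreanRatio

variable {K : Type*} [Field K]

def legRatio (l n : K) : K := (l ^ 2 - n ^ 2) / (2 * l * n)

variable [NeZero (2 : K)] {l m n : K}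

lemma legRatio_sq_add_one (hl : l ≠ 0) (hn : n ≠ 0) :
    legRatio l n ^ 2 + 1 = ((l ^ 2 + n ^ 2) / (2 * l * n)) ^ 2 := by
  unfold legRatio
  field_simp
  ring

lemma legRatio_sub_div (hl : l ≠ 0) (hn : n ≠ 0) (hlm : l + m ≠ 0) :
    legRatio l n - (l * m - n ^ 2) / ((l + m) * n) =
      (l - m) * (l ^ 2 + n ^ 2) / (2 * l * (l + m) * n) := by
  unfold legRatio
  field_simp
  ring

theorem legRatio_bisector_identity (hl : l ≠ 0) (hm : m ≠ 0) (hn : n ≠ 0) (hlm : l + m ≠ 0) :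
    let c := (l * m - n ^ 2) / ((l + m) * n)
    (legRatio l n - c) ^ 2 * (legRatio m n ^ 2 + 1) =
      (legRatio m n - c) ^ 2 * (legRatio l n ^ 2 + 1) := by
  intro c
  have hc : c = (m * l - n ^ 2) / ((m + l) * n) := by simp only [c, mul_comm, add_comm]
  have hml : m + l ≠ 0 := by rwa [add_comm]
  rw [legRatio_sub_div hl hn hlm, hc, legRatio_sub_div hm hn hml,
    legRatio_sq_add_one hm hn, legRatio_sq_add_one hl hn]
  field_simp
  ring

end PythagoreanRatio

theorem stmt_3_general (l m n : ℤ) (h0 : l * m * n ≠ 0)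
    (hsum : l + m ≠ 0)
    (a b c : ℚ)
    (ha : a = ((l : ℚ) ^ 2 - (n : ℚ) ^ 2) / (2 * l * n))
    (hb : b = ((m : ℚ) ^ 2 - (n : ℚ) ^ 2) / (2 * m * n))
    (hc : c = ((l : ℚ) * m - (n : ℚ) ^ 2) / ((l + m) * n)) :
    (a - c) ^ 2 * (b ^ 2 + 1) = (b - c) ^ 2 * (a ^ 2 + 1) := by
  obtain ⟨hlm, hn⟩ := mul_ne_zero_iff.mp h0
  obtain ⟨hl, hm⟩ := mul_ne_zero_iff.mp hlm
  subst ha hb hc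
  exact legRatio_bisector_identity (by exact_mod_cast hl) (by exact_mod_cast hm)
    (by exact_mod_cast hn) (by exact_mod_cast hsum)

theorem stmt_3 (l m n : ℤ) (h0 : l * m * n ≠ 0) (hlm : |l| ≠ |m|)
    (hn : l * m ≠ n ^ 2) (hsum : l + m ≠ 0)
    (a b c : ℚ)
    (ha : a = ((l : ℚ) ^ 2 - (n : ℚ) ^ 2) / (2 * l * n))
    (hb : b = ((m : ℚ) ^ 2 - (n : ℚ) ^ 2) / (2 * m * n))
    (hc : c = ((l : ℚ) * m - (n : ℚ) ^ 2) / ((l + m) * n)) :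
    (a - c) ^ 2 * (b ^ 2 + 1) = (b - c) ^ 2 * (a ^ 2 + 1) :=
  stmt_3_general l m n h0 hsum a b c ha hb hc
end

section
/- Let d > 1 be a square-free integer and let p1, ..., pr be distinct primes with exponents n1, ..., nr ≥ 0. If for each i the equation |x^2 - d*y^2| = pi^{ni} has an integral solution (a_{i,1}, a_{i,2}) with gcd(a_{i,1}, d*a_{i,2}) = 1, then the pair (x,y) defined by x + y*√d = ∏_{i=1}^r (a_{i,1} + a_{i,2}*√d) (in Z[√d]) satisfies |x^2 - d*y^2| = ∏ pi^{ni} and gcd(x, d*y) = 1. -/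
/-!
A prime `q` dividing both `x` and `d y`, where `x + y√d = z w`, divides `N(z) N(w)`, hence
(coprime norms) exactly one of them, say `N(z)`. If `q ∣ d`, then `q ∣ N(z) = x_z² - d y_z²`
forces `q ∣ x_z`, against the strict primitivity of `z`. Otherwise `q ∣ z w`, so `q` divides
`z w w̄ = N(w) z`, and as `q ∤ N(w)` it divides `z`, again a contradiction. Induction extends
this to products of elements with pairwise coprime norms, and distinct prime powers are coprime.
-/

theorem Int.isCoprime_of_prime_dvd {x y : ℤ}
    (H : ∀ q : ℤ, Prime q → q ∣ x → ¬q ∣ y) : IsCoprime x y :=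
  Int.isCoprime_iff_gcd_eq_one.mpr <| Nat.coprime_of_dvd fun k hk hx hy =>
    H k (Nat.prime_iff_prime_int.mp hk) (Int.natCast_dvd.mpr hx) (Int.natCast_dvd.mpr hy)

namespace Zsqrtd

variable {d : ℤ}

def IsStrictlyPrimitive (z : ℤ√d) : Prop :=
  IsCoprime z.re (d * z.im)

theorem norm_eq_re_sq_sub_mul_im_sq (z : ℤ√d) : z.norm = z.re ^ 2 - d * z.im ^ 2 := by
  rw [norm_def]
  ring

theorem norm_prod {ι : Type*} (s : Finset ι) (f : ι → ℤ√d) :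
    (∏ i ∈ s, f i).norm = ∏ i ∈ s, (f i).norm :=
  map_prod normMonoidHom f s

namespace IsStrictlyPrimitive

variable {z w : ℤ√d} {q : ℤ}

theorem not_dvd_norm (hz : z.IsStrictlyPrimitive) (hq : Prime q) (hqd : q ∣ d) :
    ¬q ∣ z.norm := by
  intro hqN
  have hre : q ∣ z.re := by
    refine hq.dvd_of_dvd_pow (n := 2) ?_
    have := dvd_add hqN (hqd.mul_right (z.im ^ 2))
    rwa [norm_eq_re_sq_sub_mul_im_sq, sub_add_cancel] at this
  exact hq.not_isUnit (hz.isUnit_of_dvd' hre (hqd.mul_right _))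

theorem not_intCast_dvd_mul (hz : z.IsStrictlyPrimitive) (hq : Prime q) (hqw : ¬q ∣ w.norm) :
    ¬(q : ℤ√d) ∣ z * w := by
  intro h
  have hdvd : (q : ℤ√d) ∣ w.norm * z := by
    rw [norm_eq_mul_conj, mul_comm, ← mul_assoc]
    exact h.mul_right _
  rw [intCast_dvd, re_smul, im_smul] at hdvd
  have hre := (hq.dvd_or_dvd hdvd.1).resolve_left hqw
  have him := (hq.dvd_or_dvd hdvd.2).resolve_left hqw
  exact hq.not_isUnit (hz.isUnit_of_dvd' hre (him.mul_left d))

theorem mul (hz : z.IsStrictlyPrimitive) (hw : w.IsStrictlyPrimitive)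
    (hzw : IsCoprime z.norm w.norm) : (z * w).IsStrictlyPrimitive := by
  refine Int.isCoprime_of_prime_dvd fun q hq hre hdim => ?_
  have hqN : q ∣ z.norm * w.norm := by
    rw [← norm_mul, norm_def]
    exact dvd_sub (hre.mul_right _) (hdim.mul_right _)
  by_cases hqd : q ∣ d
  · rcases hq.dvd_or_dvd hqN with h | h
    exacts [hz.not_dvd_norm hq hqd h, hw.not_dvd_norm hq hqd h]
  have hqzw : (q : ℤ√d) ∣ z * w :=
    (intCast_dvd _ _).mpr ⟨hre, (hq.dvd_or_dvd hdim).resolve_left hqd⟩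
  by_cases hqz : q ∣ z.norm
  · exact hz.not_intCast_dvd_mul hq (fun hqw => hq.not_isUnit (hzw.isUnit_of_dvd' hqz hqw)) hqzw
  · exact hw.not_intCast_dvd_mul hq hqz (mul_comm z w ▸ hqzw)

theorem prod {ι : Type*} {s : Finset ι} {f : ι → ℤ√d}
    (hf : ∀ i ∈ s, (f i).IsStrictlyPrimitive)
    (hcop : (s : Set ι).Pairwise fun i j => IsCoprime (f i).norm (f j).norm) :
    (∏ i ∈ s, f i).IsStrictlyPrimitive := by
  classical
  induction s using Finset.induction_on with
  | empty => simpa [IsStrictlyPrimitive] using isCoprime_one_left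
  | insert i s hi ih =>
    rw [Finset.prod_insert hi]
    refine (hf i (s.mem_insert_self i)).mul
      (ih (fun j hj => hf j (Finset.mem_insert_of_mem hj)) (hcop.mono (by simp))) ?_
    rw [norm_prod]
    refine IsCoprime.prod_right fun j hj => hcop (by simp) (by simp [hj]) ?_
    rintro rfl
    exact hi hj

end IsStrictlyPrimitive

end Zsqrtd

theorem stmt_6_general (d : ℤ) (r : ℕ)
    (p : Fin r → ℕ) (hp : ∀ i, (p i).Prime) (hinj : Function.Injective p)
    (n : Fin r → ℕ) (a : Fin r → Zsqrtd d)
    (hsol : ∀ i, |(a i).re ^ 2 - d * (a i).im ^ 2| = (p i : ℤ) ^ n i)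
    (hprim : ∀ i, Int.gcd (a i).re (d * (a i).im) = 1) :
    |(∏ i, a i).re ^ 2 - d * (∏ i, a i).im ^ 2| = ∏ i, (p i : ℤ) ^ n i ∧
      Int.gcd (∏ i, a i).re (d * (∏ i, a i).im) = 1 := by
  have habs_norm (i : Fin r) : |(a i).norm| = (p i : ℤ) ^ n i := by
    rw [Zsqrtd.norm_eq_re_sq_sub_mul_im_sq, hsol]
  refine ⟨?_, Int.isCoprime_iff_gcd_eq_one.mp ?_⟩
  · rw [← Zsqrtd.norm_eq_re_sq_sub_mul_im_sq, Zsqrtd.norm_prod, Finset.abs_prod]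
    exact Finset.prod_congr rfl fun i _ => habs_norm i
  refine Zsqrtd.IsStrictlyPrimitive.prod
    (fun i _ => Int.isCoprime_iff_gcd_eq_one.mpr (hprim i)) ?_
  intro i _ j _ hij
  rw [← IsCoprime.abs_abs_iff, habs_norm, habs_norm]
  exact (Nat.isCoprime_iff_coprime.mpr
    ((Nat.coprime_primes (hp i) (hp j)).mpr (hinj.ne hij))).pow

theorem stmt_6 (d : ℤ) (hd : 1 < d) (hsf : Squarefree d) (r : ℕ)
    (p : Fin r → ℕ) (hp : ∀ i, (p i).Prime) (hinj : Function.Injective p)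
    (n : Fin r → ℕ) (a : Fin r → Zsqrtd d)
    (hsol : ∀ i, |(a i).re ^ 2 - d * (a i).im ^ 2| = (p i : ℤ) ^ n i)
    (hprim : ∀ i, Int.gcd (a i).re (d * (a i).im) = 1) :
    |(∏ i, a i).re ^ 2 - d * (∏ i, a i).im ^ 2| = ∏ i, (p i : ℤ) ^ n i ∧
      Int.gcd (∏ i, a i).re (d * (∏ i, a i).im) = 1 :=
  stmt_6_general d r p hp hinj n a hsol hprim
end
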